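/- Let 0 < μ < 1 and define t(c) = ((1+μ)/2)·h((c+μ)/(1+μ)) and r(c) = ((1+μ)/2)·h((c+1)/(1+μ)) for c ∈ [−μ, μ]. Then t(c) < r(c) for c ∈ (−μ, 0), t(0) = r(0), and t(c) > r(c) for c ∈ (0, μ). -/

import Mathlib

/-!
Since `1 - (c + μ)/(1 + μ) = (1 - c)/(1 + μ)`, the symmetry `h(p) = h(1 - p)` gives `t(c) = r(-c)`;
in particular `t(0) = r(0)`, and the case `c > 0` reduces to the case `c < 0`. For `c < 0` the
argument `(c + 1)/(1 + μ)` of `r` is strictly closer to `1/2` than the argument `(c + μ)/(1 + μ)`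
of `t` (the difference of the squared distances is `2c(1 - μ)/(1 + μ)²`), and `h` is strictly
increasing in the closeness to `1/2`.
-/

/-- Binary entropy in bits (with `h 0 = h 1 = 0` since `logb 2 0 = 0`). -/
noncomputable def binEnt (p : ℝ) : ℝ := -(p * Real.logb 2 p) - (1 - p) * Real.logb 2 (1 - p)

open Real Set

lemma binEnt_eq_binEntropy_div (p : ℝ) : binEnt p = binEntropy p / log 2 := by
  simp only [binEnt, binEntropy, logb, log_inv]
  ring

lemma binEnt_one_sub (p : ℝ) : binEnt (1 - p) = binEnt p := by
  rw [binEnt_eq_binEntropy_div, binEnt_eq_binEntropy_div, binEntropy_one_sub]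

lemma binEntropy_two_inv_sub_abs (p : ℝ) : binEntropy (2⁻¹ - |p - 2⁻¹|) = binEntropy p := by
  rcases le_total p 2⁻¹ with hp | hp
  · rw [abs_of_nonpos (sub_nonpos.2 hp), sub_neg_eq_add, add_sub_cancel]
  · rw [abs_of_nonneg (sub_nonneg.2 hp), ← binEntropy_two_inv_add, add_sub_cancel]

lemma binEntropy_lt_binEntropy_of_abs_sub_two_inv_lt {p q : ℝ} (hp : p ∈ Icc (0 : ℝ) 1)
    (h : |q - 2⁻¹| < |p - 2⁻¹|) : binEntropy p < binEntropy q := by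
  have hp_dist : |p - 2⁻¹| ≤ 2⁻¹ := abs_le.2 ⟨by linarith [hp.1], by linarith [hp.2]⟩
  rw [← binEntropy_two_inv_sub_abs p, ← binEntropy_two_inv_sub_abs q]
  apply binEntropy_strictMonoOn
  · constructor <;> linarith [abs_nonneg (p - 2⁻¹)]
  · constructor <;> linarith [abs_nonneg (q - 2⁻¹)]
  · linarith

lemma binEnt_lt_binEnt_of_abs_sub_two_inv_lt {p q : ℝ} (hp : p ∈ Icc (0 : ℝ) 1)
    (h : |q - 2⁻¹| < |p - 2⁻¹|) : binEnt p < binEnt q := by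
  rw [binEnt_eq_binEntropy_div, binEnt_eq_binEntropy_div]
  exact div_lt_div_of_pos_right (binEntropy_lt_binEntropy_of_abs_sub_two_inv_lt hp h)
    (log_pos one_lt_two)

lemma binEnt_neg_add_one_div {μ : ℝ} (c : ℝ) (hμ : 1 + μ ≠ 0) :
    binEnt ((-c + 1) / (1 + μ)) = binEnt ((c + μ) / (1 + μ)) := by
  rw [← binEnt_one_sub]
  congr 1
  field_simp
  ring

lemma binEnt_add_div_lt_binEnt_add_one_div {μ c : ℝ} (hμ : μ < 1) (hc : -μ < c) (hc0 : c < 0) :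
    binEnt ((c + μ) / (1 + μ)) < binEnt ((c + 1) / (1 + μ)) := by
  have hs : 0 < 1 + μ := by linarith
  apply binEnt_lt_binEnt_of_abs_sub_two_inv_lt
  · exact ⟨div_nonneg (by linarith) hs.le, (div_le_one hs).2 (by linarith)⟩
  · have dist_eq (x : ℝ) : x / (1 + μ) - 2⁻¹ = (2 * x - (1 + μ)) / (2 * (1 + μ)) := by
      field_simp
    rw [dist_eq, dist_eq, ← sq_lt_sq, div_pow, div_pow,
      div_lt_div_iff_of_pos_right (by positivity)]
    nlinarith

/-- Lemma 3 of the paper: comparison of `t(c) = ((1+μ)/2)·h((c+μ)/(1+μ))` and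
`r(c) = ((1+μ)/2)·h((c+1)/(1+μ))` on `[-μ, μ]`. -/
theorem lemma_t_vs_r (μ : ℝ) (hμ0 : 0 < μ) (hμ1 : μ < 1) :
    (∀ c ∈ Set.Ioo (-μ) (0 : ℝ),
        ((1 + μ) / 2) * binEnt ((c + μ) / (1 + μ)) <
          ((1 + μ) / 2) * binEnt ((c + 1) / (1 + μ))) ∧
    ((1 + μ) / 2) * binEnt ((0 + μ) / (1 + μ)) =
        ((1 + μ) / 2) * binEnt ((0 + 1) / (1 + μ)) ∧
    (∀ c ∈ Set.Ioo (0 : ℝ) μ,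
        ((1 + μ) / 2) * binEnt ((c + 1) / (1 + μ)) <
          ((1 + μ) / 2) * binEnt ((c + μ) / (1 + μ))) := by
  have hs : 1 + μ ≠ 0 := by positivity
  have hfac : 0 < (1 + μ) / 2 := by positivity
  refine ⟨fun c hc => ?_, ?_, fun c hc => ?_⟩
  · exact mul_lt_mul_of_pos_left (binEnt_add_div_lt_binEnt_add_one_div hμ1 hc.1 hc.2) hfac
  · simpa using congrArg ((1 + μ) / 2 * ·) (binEnt_neg_add_one_div 0 hs).symm
  · have h := binEnt_add_div_lt_binEnt_add_one_div hμ1 (neg_lt_neg hc.2) (neg_neg_of_pos hc.1)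
    rw [binEnt_neg_add_one_div c hs, ← binEnt_neg_add_one_div (-c) hs, neg_neg] at h
    exact mul_lt_mul_of_pos_left h hfac
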